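/- arXiv:2507.02119 — 5 statements merged into one kernel-verified Lean document; each statement's English description precedes it below -/
import Mathlib

section
/- Let μ, ν > 0, κ > 0, γ ∈ ℝ. Define 𝓛(t,p) = t^(−μ) + p^(−ν), t*(p) = κ·p^γ, and ℓ(x,p) = 𝓛(x·t*(p), p)/𝓛(t*(p), p) for x ∈ (0,1], p > 0. Then ℓ(x,p) is independent of p for all x ∈ (0,1] (i.e., there exists φ : (0,1] → ℝ with ℓ(x,p) = φ(x) for all x, p) if and only if γ = ν/μ. Thus the compute-optimal horizon exponent is the unique power-law horizon exponent producing scaling collapse, up to the constant multiplier κ. -/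
/-- **The compute-optimal horizon exponent is the unique one producing scaling collapse.**
For `𝓛(t,p) = t^(−μ) + p^(−ν)` and power-law horizon `t*(p) = κ·p^γ`, the normalized
loss curve `ℓ(x,p) = 𝓛(x·t*(p),p)/𝓛(t*(p),p)` is independent of `p` on `x ∈ (0,1]`
if and only if `γ = ν/μ`. -/
theorem stmt_2
    (μ ν κ γ : ℝ) (hμ : 0 < μ) (hν : 0 < ν) (hκ : 0 < κ)
    (𝓛 : ℝ → ℝ → ℝ) (h𝓛 : ∀ t p : ℝ, 𝓛 t p = t ^ (-μ) + p ^ (-ν))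
    (tstar : ℝ → ℝ) (htstar : ∀ p : ℝ, tstar p = κ * p ^ γ)
    (ℓ : ℝ → ℝ → ℝ)
    (hℓ : ∀ x p : ℝ, ℓ x p = 𝓛 (x * tstar p) p / 𝓛 (tstar p) p) :
    (∃ φ : ℝ → ℝ, ∀ x ∈ Set.Ioc (0:ℝ) 1, ∀ p : ℝ, 0 < p → ℓ x p = φ x) ↔ γ = ν / μ := by
  have hc : (0:ℝ) < κ ^ (-μ) := Real.rpow_pos_of_pos hκ _
  set c := κ ^ (-μ) with hcdef
  have key : ∀ x p : ℝ, 0 < x → 0 < p →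
      ℓ x p = (x ^ (-μ) * c * p ^ (γ * -μ) + p ^ (-ν)) /
              (c * p ^ (γ * -μ) + p ^ (-ν)) := by
    intro x p hx hp
    have hpγ : (0:ℝ) < p ^ γ := Real.rpow_pos_of_pos hp _
    rw [hℓ, h𝓛, h𝓛, htstar]
    rw [Real.mul_rpow hx.le (by positivity), Real.mul_rpow hκ.le hpγ.le,
      ← Real.rpow_mul hp.le, ← hcdef]
    ring_nf
  constructor
  · rintro ⟨φ, hφ⟩
    have hx2 : (1/2 : ℝ) ∈ Set.Ioc (0:ℝ) 1 := by constructor <;> norm_num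
    have h1 := hφ (1/2) hx2 1 one_pos
    have h2 := hφ (1/2) hx2 2 two_pos
    rw [key _ _ (by norm_num) one_pos] at h1
    rw [key _ _ (by norm_num) two_pos] at h2
    set a := ((1:ℝ)/2) ^ (-μ) with hadef
    have ha : 1 < a := by
      rw [hadef]
      exact Real.one_lt_rpow_iff_of_pos (by norm_num) |>.mpr
        (Or.inr ⟨by norm_num, by linarith⟩)
    set s := (2:ℝ) ^ (γ * -μ) with hsdef
    set t := (2:ℝ) ^ (-ν) with htdef
    have hs : (0:ℝ) < s := Real.rpow_pos_of_pos two_pos _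
    have ht : (0:ℝ) < t := Real.rpow_pos_of_pos two_pos _
    simp only [Real.one_rpow, mul_one] at h1
    have heq : (a * c + 1) / (c + 1) = (a * c * s + t) / (c * s + t) := by
      exact h1.trans h2.symm
    rw [div_eq_div_iff (by positivity) (by positivity)] at heq
    have hfac : c * (a - 1) * (t - s) = 0 := by nlinarith [heq]
    have hts : t = s := by
      rcases mul_eq_zero.mp hfac with h | h
      · rcases mul_eq_zero.mp h with h | h
        · exact absurd h hc.ne'
        · exact absurd h (by linarith)
      · linarith
    have hlog : (-ν) * Real.log 2 = (γ * -μ) * Real.log 2 := by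
      rw [← Real.log_rpow two_pos, ← Real.log_rpow two_pos, ← htdef, ← hsdef, hts]
    have hl2 : Real.log 2 ≠ 0 := by
      have := Real.log_pos (by norm_num : (1:ℝ) < 2); linarith
    have : -ν = γ * -μ := mul_right_cancel₀ hl2 hlog
    field_simp
    linarith [this]
  · intro hγ
    refine ⟨fun x => (x ^ (-μ) * c + 1) / (c + 1), ?_⟩
    intro x hx p hp
    have hγμ : γ * -μ = -ν := by rw [hγ]; field_simp
    rw [key _ _ hx.1 hp, hγμ]
    have hpν : (0:ℝ) < p ^ (-ν) := Real.rpow_pos_of_pos hp _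
    rw [show x ^ (-μ) * c * p ^ (-ν) + p ^ (-ν) = (x ^ (-μ) * c + 1) * p ^ (-ν) by ring,
        show c * p ^ (-ν) + p ^ (-ν) = (c + 1) * p ^ (-ν) by ring,
        mul_div_mul_right _ _ hpν.ne']
end

section
/- Let μ, ν > 0, κ > 0, γ > 0, and E > 0. Define t*(p) = κ·p^γ and the offset-normalized curve ℓ_E(x,p) = ((x·t*(p))^(−μ) + p^(−ν) + E)/((t*(p))^(−μ) + p^(−ν) + E) for x ∈ (0,1], p > 0. Then ℓ_E is not independent of p: there exist x ∈ (0,1) and p₁, p₂ > 0 with ℓ_E(x,p₁) ≠ ℓ_E(x,p₂). That is, subtracting an offset L̂ = L₀ + E with E ≠ 0 instead of the true irreducible loss L₀ breaks the scaling collapse for any power-law training horizon. -/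
/-- **A wrong irreducible-loss offset breaks the scaling collapse.**
With any `E > 0`, the offset-normalized curve
`ℓ_E(x,p) = ((x·t*(p))^(−μ) + p^(−ν) + E)/((t*(p))^(−μ) + p^(−ν) + E)` for the
power-law horizon `t*(p) = κ·p^γ` is not independent of `p`: there are
`x ∈ (0,1)` and `p₁, p₂ > 0` with `ℓ_E(x,p₁) ≠ ℓ_E(x,p₂)`. -/
theorem stmt_3
    (μ ν κ γ E : ℝ) (hμ : 0 < μ) (hν : 0 < ν) (hκ : 0 < κ) (hγ : 0 < γ) (hE : 0 < E)
    (tstar : ℝ → ℝ) (htstar : ∀ p : ℝ, tstar p = κ * p ^ γ)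
    (ℓE : ℝ → ℝ → ℝ)
    (hℓE : ∀ x p : ℝ, ℓE x p =
      ((x * tstar p) ^ (-μ) + p ^ (-ν) + E) / ((tstar p) ^ (-μ) + p ^ (-ν) + E)) :
    ∃ x ∈ Set.Ioo (0:ℝ) 1, ∃ p₁ p₂ : ℝ, 0 < p₁ ∧ 0 < p₂ ∧ ℓE x p₁ ≠ ℓE x p₂ := by
  -- choose x = 1/2
  set x : ℝ := 1/2 with hxdef
  have hx0 : (0:ℝ) < x := by norm_num
  have hx1 : x < 1 := by norm_num
  set a : ℝ := x ^ (-μ) with hadef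
  have ha1 : 1 < a := by
    rw [hadef]
    rw [Real.one_lt_rpow_iff_of_pos hx0]
    right
    exact ⟨hx1, neg_neg_of_pos hμ⟩
  -- choose p₂ with p₂ ^ (γ*μ) = M := (1+E)/E + 1
  set M : ℝ := (1 + E) / E + 1 with hMdef
  have hM1 : 1 < M := by
    have h : 0 < (1 + E) / E := div_pos (by linarith) hE
    rw [hMdef]; linarith
  have hγμ : 0 < γ * μ := mul_pos hγ hμ
  set p₂ : ℝ := M ^ (1 / (γ * μ)) with hp2def
  have hp₂pos : 0 < p₂ := Real.rpow_pos_of_pos (by linarith) _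
  have hM0 : (0:ℝ) ≤ M := by linarith
  have hp₂pow : p₂ ^ (γ * μ) = M := by
    rw [hp2def, ← Real.rpow_mul hM0, one_div, inv_mul_cancel₀ (ne_of_gt hγμ), Real.rpow_one]
  refine ⟨x, ⟨hx0, hx1⟩, 1, p₂, one_pos, hp₂pos, ?_⟩
  -- abbreviations
  have h1γ : (1:ℝ) ^ γ = 1 := Real.one_rpow γ
  have hT1 : tstar 1 = κ := by rw [htstar]; simp [h1γ]
  have hT2 : tstar p₂ = κ * p₂ ^ γ := htstar p₂
  set T₁ : ℝ := κ ^ (-μ) with hT1d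
  set D₁ : ℝ := 1 + E with hD1d
  set T₂ : ℝ := (κ * p₂ ^ γ) ^ (-μ) with hT2d
  set D₂ : ℝ := p₂ ^ (-ν) + E with hD2d
  have hT₁pos : 0 < T₁ := Real.rpow_pos_of_pos hκ _
  have hT₂pos : 0 < T₂ := Real.rpow_pos_of_pos (mul_pos hκ (Real.rpow_pos_of_pos hp₂pos _)) _
  have hD₁pos : 0 < D₁ := by rw [hD1d]; linarith
  have hD₂pos : 0 < D₂ := by
    have := Real.rpow_pos_of_pos hp₂pos (-ν); rw [hD2d]; linarith
  -- key strict inequality D₁ * T₂ < D₂ * T₁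
  have hkey : D₁ * T₂ < D₂ * T₁ := by
    have hT2eq : T₂ = T₁ * p₂ ^ (-(γ * μ)) := by
      rw [hT2d, hT1d, Real.mul_rpow (le_of_lt hκ) (le_of_lt (Real.rpow_pos_of_pos hp₂pos γ)),
        ← Real.rpow_mul (le_of_lt hp₂pos), show γ * (-μ) = -(γ * μ) by ring]
    have hpneg : p₂ ^ (-(γ * μ)) = 1 / M := by
      rw [Real.rpow_neg (le_of_lt hp₂pos), hp₂pow, one_div]
    have h1 : D₁ * p₂ ^ (-(γ * μ)) < E := by
      rw [hpneg, hD1d, mul_one_div, div_lt_iff₀ (by linarith : (0:ℝ) < M)]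
      have hEM : E * M = 1 + 2 * E := by rw [hMdef]; field_simp; ring
      linarith
    have h2 : E < D₂ := by
      have := Real.rpow_pos_of_pos hp₂pos (-ν); rw [hD2d]; linarith
    calc D₁ * T₂ = (D₁ * p₂ ^ (-(γ * μ))) * T₁ := by rw [hT2eq]; ring
      _ < E * T₁ := by exact mul_lt_mul_of_pos_right h1 hT₁pos
      _ < D₂ * T₁ := mul_lt_mul_of_pos_right h2 hT₁pos
  -- rewrite ℓE values
  have hx1μ : (x * tstar 1) ^ (-μ) = a * T₁ := by
    rw [hT1, Real.mul_rpow (le_of_lt hx0) (le_of_lt hκ), hadef, hT1d]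
  have hx2μ : (x * tstar p₂) ^ (-μ) = a * T₂ := by
    rw [hT2, Real.mul_rpow (le_of_lt hx0)
      (le_of_lt (mul_pos hκ (Real.rpow_pos_of_pos hp₂pos γ))), hadef, hT2d]
  have h1ν : (1:ℝ) ^ (-ν) = 1 := Real.one_rpow _
  have e1 : ℓE x 1 = (a * T₁ + D₁) / (T₁ + D₁) := by
    rw [hℓE, hx1μ, hT1, h1ν, hD1d, hT1d]; ring_nf
  have e2 : ℓE x p₂ = (a * T₂ + D₂) / (T₂ + D₂) := by
    rw [hℓE, hx2μ, hT2, hD2d, hT2d]; ring_nf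
  rw [e1, e2]
  intro heq
  rw [div_eq_div_iff (by linarith) (by linarith)] at heq
  nlinarith [hkey, ha1, hT₁pos, hT₂pos, hD₁pos, hD₂pos,
    mul_pos hT₁pos hD₂pos, mul_pos hT₂pos hD₁pos]
end

section
/- (Necessity of a power-law Pareto frontier for collapse.) Let 𝓛 : (0,∞) × (0,∞) → (0,∞) be continuously differentiable in its first argument (compute c) for each model size p. Let P ⊆ (0,∞) be a nonempty set, c* : P → (0,∞) a map whose image is an open interval I ⊆ (0,∞), and 𝓛* : I → (0,∞) a differentiable function satisfying 𝓛*(c) ≤ 𝓛(c,p) for all c ∈ I and p ∈ P, with equality 𝓛*(c*(p)) = 𝓛(c*(p), p) for every p ∈ P. Define ℓ(x,p) = 𝓛(x·c*(p), p)/𝓛(c*(p), p) for x > 0. If there exist an open neighborhood U of 1 and a function φ : U → (0,∞) such that ℓ(x,p) = φ(x) for all x ∈ U and all p ∈ P, then there exist constants a > 0 and δ ∈ ℝ such that 𝓛*(c) = a·c^(−δ) for all c ∈ I. -/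
/-!
Where a curve `𝓛(·, p)` touches the frontier `𝓛*` from above, the two have the same derivative.
Differentiating the collapsed normalized curve `ℓ(x, p) = φ(x)` at `x = 1` therefore gives
`c 𝓛*'(c) / 𝓛*(c) = φ'(1)` at every point `c = c*(p)` of `I`, so `log 𝓛*` is affine in `log c`.
-/

open Real Set Filter Topology

theorem HasDerivAt.eq_of_eventually_le_of_eq {f g : ℝ → ℝ} {f' g' x : ℝ}
    (hf : HasDerivAt f f' x) (hg : HasDerivAt g g' x) (hle : ∀ᶠ y in 𝓝 x, g y ≤ f y)
    (heq : g x = f x) : g' = f' := by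
  have hmin : IsLocalMin (fun y => f y - g y) x := by
    filter_upwards [hle] with y hy
    linarith
  linarith [hmin.hasDerivAt_eq_zero (hf.sub hg)]

theorem HasDerivAt.comp_mul_const_div_const_at_one {F : ℝ → ℝ} {F' c : ℝ}
    (hF : HasDerivAt F F' c) :
    HasDerivAt (fun x => F (x * c) / F c) (c * F' / F c) 1 := by
  have hF' : HasDerivAt F F' (1 * c) := by rwa [one_mul]
  have hcomp := (hF'.comp 1 (hasDerivAt_mul_const c)).div_const (F c)
  exact hcomp.congr_deriv (by ring)

theorem exists_eq_mul_rpow_of_hasDerivAt {s : Set ℝ} {f : ℝ → ℝ} {k : ℝ}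
    (hs : IsOpen s) (hs' : IsPreconnected s) (hs0 : s ⊆ Ioi 0) (hf0 : ∀ x ∈ s, 0 < f x)
    (hf : ∀ x ∈ s, HasDerivAt f (k * f x / x) x) :
    ∃ a, 0 < a ∧ ∀ x ∈ s, f x = a * x ^ k := by
  have hlog : ∀ x ∈ s, HasDerivAt (fun x => log (f x)) (k / x) x := fun x hx =>
    ((hf x hx).log (hf0 x hx).ne').congr_deriv (by field_simp [(hf0 x hx).ne'])
  have hklog : ∀ x ∈ s, HasDerivAt (fun x => k * log x) (k / x) x := fun x hx =>
    ((hasDerivAt_log (hs0 hx).ne').const_mul k).congr_deriv (by ring)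
  obtain ⟨b, hb⟩ := hs.exists_eq_add_of_deriv_eq hs'
    (fun x hx => (hlog x hx).differentiableAt.differentiableWithinAt)
    (fun x hx => (hklog x hx).differentiableAt.differentiableWithinAt)
    (fun x hx => (hlog x hx).deriv.trans (hklog x hx).deriv.symm)
  refine ⟨exp b, exp_pos b, fun x hx => ?_⟩
  calc f x = exp (log (f x)) := (exp_log (hf0 x hx)).symm
    _ = exp (log x * k + b) := by rw [show log (f x) = k * log x + b from hb hx, mul_comm]
    _ = exp b * x ^ k := by rw [exp_add, rpow_def_of_pos (hs0 hx), mul_comm]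

theorem stmt_4_general
    (𝓛 : ℝ → ℝ → ℝ)
    (hC1 : ∀ p : ℝ, 0 < p → ContDiffOn ℝ 1 (fun c => 𝓛 c p) (Set.Ioi 0))
    (P : Set ℝ) (hP : P ⊆ Set.Ioi 0)
    (cstar : ℝ → ℝ)
    (I : Set ℝ) (hIopen : IsOpen I) (hIconn : I.OrdConnected) (hIpos : I ⊆ Set.Ioi 0)
    (himage : cstar '' P = I)
    (Lstar : ℝ → ℝ)
    (hLdiff : DifferentiableOn ℝ Lstar I)
    (hLpos : ∀ c ∈ I, 0 < Lstar c)
    (hlower : ∀ c ∈ I, ∀ p ∈ P, Lstar c ≤ 𝓛 c p)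
    (htangent : ∀ p ∈ P, Lstar (cstar p) = 𝓛 (cstar p) p)
    (ℓ : ℝ → ℝ → ℝ)
    (hℓ : ∀ x p : ℝ, ℓ x p = 𝓛 (x * cstar p) p / 𝓛 (cstar p) p)
    (hcollapse : ∃ U : Set ℝ, IsOpen U ∧ (1:ℝ) ∈ U ∧
      ∃ φ : ℝ → ℝ, ∀ x ∈ U, ∀ p ∈ P, ℓ x p = φ x) :
    ∃ a : ℝ, 0 < a ∧ ∃ δ : ℝ, ∀ c ∈ I, Lstar c = a * c ^ (-δ) := by
  obtain ⟨U, hU, h1U, φ, hφ⟩ := hcollapse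
  have hslope : ∀ c ∈ I, HasDerivAt Lstar (deriv φ 1 * Lstar c / c) c := by
    intro c hc
    obtain ⟨p, hp, rfl⟩ : c ∈ cstar '' P := himage ▸ hc
    have hc0 : 0 < cstar p := hIpos hc
    have hF : HasDerivAt (𝓛 · p) (deriv (𝓛 · p) (cstar p)) (cstar p) :=
      (((hC1 p (hP hp)).differentiableOn one_ne_zero).differentiableAt
        (Ioi_mem_nhds hc0)).hasDerivAt
    have hL : HasDerivAt Lstar (deriv Lstar (cstar p)) (cstar p) :=
      (hLdiff.differentiableAt (hIopen.mem_nhds hc)).hasDerivAt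
    have htouch : deriv Lstar (cstar p) = deriv (𝓛 · p) (cstar p) :=
      hF.eq_of_eventually_le_of_eq hL
        (eventually_of_mem (hIopen.mem_nhds hc) fun c hc => hlower c hc p hp) (htangent p hp)
    have hφ' : HasDerivAt φ (cstar p * deriv Lstar (cstar p) / Lstar (cstar p)) 1 := by
      rw [htouch, htangent p hp]
      refine hF.comp_mul_const_div_const_at_one.congr_of_eventuallyEq ?_
      filter_upwards [hU.mem_nhds h1U] with x hx
      rw [← hφ x hx p hp, hℓ]
    rw [hφ'.deriv]
    convert hL using 1
    field_simp [(hLpos _ hc).ne', hc0.ne']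
  obtain ⟨a, ha, hpow⟩ :=
    exists_eq_mul_rpow_of_hasDerivAt hIopen hIconn.isPreconnected hIpos hLpos hslope
  exact ⟨a, ha, -deriv φ 1, by simpa only [neg_neg] using hpow⟩

/-- **Necessity of a power-law Pareto frontier for scaling collapse.**
If the loss curves `𝓛(c,p)` (C¹ in compute `c`, positive) admit a differentiable Pareto
frontier `𝓛*` on an open interval `I ⊆ (0,∞)` which is the image of the compute-optimal
map `c*`, with `𝓛*(c) ≤ 𝓛(c,p)` and tangency `𝓛*(c*(p)) = 𝓛(c*(p),p)`, and if the
normalized curves `ℓ(x,p) = 𝓛(x·c*(p),p)/𝓛(c*(p),p)` collapse (are `p`-independent) on a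
neighborhood of `x = 1`, then `𝓛*` is a power law `a·c^(−δ)` on `I`. -/
theorem stmt_4
    (𝓛 : ℝ → ℝ → ℝ)
    (hpos : ∀ c p : ℝ, 0 < c → 0 < p → 0 < 𝓛 c p)
    (hC1 : ∀ p : ℝ, 0 < p → ContDiffOn ℝ 1 (fun c => 𝓛 c p) (Set.Ioi 0))
    (P : Set ℝ) (hPne : P.Nonempty) (hP : P ⊆ Set.Ioi 0)
    (cstar : ℝ → ℝ) (hcstar : ∀ p ∈ P, 0 < cstar p)
    (I : Set ℝ) (hIopen : IsOpen I) (hIconn : I.OrdConnected) (hIpos : I ⊆ Set.Ioi 0)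
    (himage : cstar '' P = I)
    (Lstar : ℝ → ℝ)
    (hLdiff : DifferentiableOn ℝ Lstar I)
    (hLpos : ∀ c ∈ I, 0 < Lstar c)
    (hlower : ∀ c ∈ I, ∀ p ∈ P, Lstar c ≤ 𝓛 c p)
    (htangent : ∀ p ∈ P, Lstar (cstar p) = 𝓛 (cstar p) p)
    (ℓ : ℝ → ℝ → ℝ)
    (hℓ : ∀ x p : ℝ, ℓ x p = 𝓛 (x * cstar p) p / 𝓛 (cstar p) p)
    (hcollapse : ∃ U : Set ℝ, IsOpen U ∧ (1:ℝ) ∈ U ∧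
      ∃ φ : ℝ → ℝ, ∀ x ∈ U, ∀ p ∈ P, ℓ x p = φ x) :
    ∃ a : ℝ, 0 < a ∧ ∃ δ : ℝ, ∀ c ∈ I, Lstar c = a * c ^ (-δ) :=
  stmt_4_general 𝓛 hC1 P hP cstar I hIopen hIconn hIpos himage Lstar hLdiff hLpos hlower htangent ℓ
    hℓ hcollapse
end

section
/- (Asymptotic scaling collapse for sum-of-power-laws loss curves.) Let m ≥ 1, a_i > 0, μ_i, ν_i ≥ 0 with μ_i + ν_i > 0 for each i, κ > 0, γ > 0. Set t*(p) = κ·p^γ, b_i = a_i·κ^(−μ_i), β_i = μ_i·γ + ν_i, and suppose β₁ = β₂ = … = β_k < β_{k+1} ≤ … ≤ β_m for some 1 ≤ k < m. Define ℓ(x,p) = (Σᵢ b_i·x^(−μ_i)·p^(−β_i))/(Σᵢ b_i·p^(−β_i)) and ε = β_{k+1} − β₁ > 0. Then for every x₀ ∈ (0,1] there exist constants C > 0 and P₀ > 0 such that for all x ∈ [x₀, 1] and all p ≥ P₀: |ℓ(x,p) − (Σ_{i≤k} b_i·x^(−μ_i))/(Σ_{i≤k} b_i)| ≤ C·p^(−ε).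 In other words, the normalized loss curves collapse onto the p-independent curve x ↦ (Σ_{i≤k} b_i·x^(−μ_i))/(Σ_{i≤k} b_i) with finite-size error decaying as O(p^(−ε)). -/
open Finset in
set_option maxHeartbeats 1000000 in
/-- **Asymptotic scaling collapse for sum-of-power-laws loss curves.**
With `bᵢ = aᵢ·κ^(−μᵢ)`, total exponents `βᵢ = μᵢ·γ + νᵢ` satisfying
`β₀ = … = β_{k−1} < β_k ≤ … ≤ β_{m−1}` and gap `ε = β_k − β₀ > 0`, the normalized curves
`ℓ(x,p) = (Σᵢ bᵢ·x^(−μᵢ)·p^(−βᵢ))/(Σᵢ bᵢ·p^(−βᵢ))` collapse onto the `p`-independent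
curve `x ↦ (Σ_{i<k} bᵢ·x^(−μᵢ))/(Σ_{i<k} bᵢ)` with error `O(p^(−ε))`, uniformly on
`[x₀, 1]` for each `x₀ ∈ (0,1]`. -/
theorem stmt_8
    (m k : ℕ) (hk : 1 ≤ k) (hkm : k < m)
    (a μ ν : Fin m → ℝ)
    (ha : ∀ i, 0 < a i) (hμ : ∀ i, 0 ≤ μ i) (hν : ∀ i, 0 ≤ ν i)
    (hμν : ∀ i, 0 < μ i + ν i)
    (κ γ : ℝ) (hκ : 0 < κ) (hγ : 0 < γ)
    (b β : Fin m → ℝ)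
    (hb : ∀ i, b i = a i * κ ^ (-(μ i)))
    (hβ : ∀ i, β i = μ i * γ + ν i)
    (htie : ∀ i : Fin m, i.val < k → β i = β ⟨0, by omega⟩)
    (hmono : Monotone β)
    (hgap : β ⟨0, by omega⟩ < β ⟨k, hkm⟩)
    (ε : ℝ) (hε : ε = β ⟨k, hkm⟩ - β ⟨0, by omega⟩)
    (ℓ : ℝ → ℝ → ℝ)
    (hℓ : ∀ x p : ℝ, ℓ x p =
      (∑ i, b i * x ^ (-(μ i)) * p ^ (-(β i))) / (∑ i, b i * p ^ (-(β i)))) :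
    ∀ x₀ ∈ Set.Ioc (0:ℝ) 1, ∃ C : ℝ, 0 < C ∧ ∃ P₀ : ℝ, 0 < P₀ ∧
      ∀ x ∈ Set.Icc x₀ 1, ∀ p : ℝ, P₀ ≤ p →
        |ℓ x p - (∑ i ∈ univ.filter (fun i : Fin m => i.val < k), b i * x ^ (-(μ i))) /
          (∑ i ∈ univ.filter (fun i : Fin m => i.val < k), b i)| ≤ C * p ^ (-ε) := by
  intro x₀ hx₀
  obtain ⟨hx₀0, hx₀1⟩ := hx₀
  have hbpos : ∀ i, 0 < b i := fun i => (hb i) ▸ mul_pos (ha i) (Real.rpow_pos_of_pos hκ _)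
  set K := univ.filter (fun i : Fin m => i.val < k) with hK
  set Kc := univ.filter (fun i : Fin m => ¬ i.val < k) with hKc
  have hmemK : (⟨0, by omega⟩ : Fin m) ∈ K := by simp [hK]; omega
  have hmemKc : (⟨k, hkm⟩ : Fin m) ∈ Kc := by simp [hKc]
  set S := ∑ i ∈ K, b i with hS
  set N₀ := ∑ i ∈ K, b i * x₀ ^ (-(μ i)) with hN₀
  set A := ∑ i ∈ Kc, b i * x₀ ^ (-(μ i)) with hA
  set B := ∑ i ∈ Kc, b i with hB
  have hSpos : 0 < S := Finset.sum_pos (fun i _ => hbpos i) ⟨_, hmemK⟩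
  have hN₀pos : 0 < N₀ := Finset.sum_pos
    (fun i _ => mul_pos (hbpos i) (Real.rpow_pos_of_pos hx₀0 _)) ⟨_, hmemK⟩
  have hApos : 0 < A := Finset.sum_pos
    (fun i _ => mul_pos (hbpos i) (Real.rpow_pos_of_pos hx₀0 _)) ⟨_, hmemKc⟩
  have hBpos : 0 < B := Finset.sum_pos (fun i _ => hbpos i) ⟨_, hmemKc⟩
  refine ⟨(A * S + N₀ * B) / S ^ 2, by positivity, 1, one_pos, ?_⟩
  intro x hx p hp
  obtain ⟨hxl, hxr⟩ := hx
  have hx0 : 0 < x := lt_of_lt_of_le hx₀0 hxl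
  have hp0 : (0:ℝ) < p := lt_of_lt_of_le one_pos hp
  set β₀ := β ⟨0, by omega⟩ with hβ₀
  set N := ∑ i ∈ K, b i * x ^ (-(μ i)) with hNdef
  set r := ∑ i ∈ Kc, b i * x ^ (-(μ i)) * p ^ (β₀ - β i) with hrdef
  set s := ∑ i ∈ Kc, b i * p ^ (β₀ - β i) with hsdef
  -- positivity / nonnegativity facts
  have hNpos : 0 < N := Finset.sum_pos
    (fun i _ => mul_pos (hbpos i) (Real.rpow_pos_of_pos hx0 _)) ⟨_, hmemK⟩
  have hrnn : 0 ≤ r := Finset.sum_nonneg fun i _ =>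
    (mul_nonneg (mul_nonneg (hbpos i).le (Real.rpow_pos_of_pos hx0 _).le)
      (Real.rpow_pos_of_pos hp0 _).le)
  have hsnn : 0 ≤ s := Finset.sum_nonneg fun i _ =>
    (mul_nonneg (hbpos i).le (Real.rpow_pos_of_pos hp0 _).le)
  -- the normalized loss equals (N+r)/(S+s)
  have hsplitN : (∑ i, b i * x ^ (-(μ i)) * p ^ (-(β i)))
      = p ^ (-β₀) * (N + r) := by
    rw [← Finset.sum_filter_add_sum_filter_not univ (fun i : Fin m => i.val < k)]
    rw [mul_add, ← hK, ← hKc]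
    congr 1
    · rw [hNdef, Finset.mul_sum]
      refine Finset.sum_congr rfl fun i hi => ?_
      rw [hK, Finset.mem_filter] at hi
      rw [htie i hi.2]
      ring
    · rw [hrdef, Finset.mul_sum]
      refine Finset.sum_congr rfl fun i hi => ?_
      rw [show -(β i) = -β₀ + (β₀ - β i) by ring, Real.rpow_add hp0]
      ring
  have hsplitD : (∑ i, b i * p ^ (-(β i))) = p ^ (-β₀) * (S + s) := by
    rw [← Finset.sum_filter_add_sum_filter_not univ (fun i : Fin m => i.val < k)]
    rw [mul_add, ← hK, ← hKc]
    congr 1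
    · rw [hS, Finset.mul_sum]
      refine Finset.sum_congr rfl fun i hi => ?_
      rw [hK, Finset.mem_filter] at hi
      rw [htie i hi.2]
      ring
    · rw [hsdef, Finset.mul_sum]
      refine Finset.sum_congr rfl fun i hi => ?_
      rw [show -(β i) = -β₀ + (β₀ - β i) by ring, Real.rpow_add hp0]
      ring
  have hℓeq : ℓ x p = (N + r) / (S + s) := by
    rw [hℓ, hsplitN, hsplitD,
      mul_div_mul_left _ _ (ne_of_gt (Real.rpow_pos_of_pos hp0 (-β₀)))]
  -- exponent bounds on Kc
  have hexp : ∀ i ∈ Kc, p ^ (β₀ - β i) ≤ p ^ (-ε) := by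
    intro i hi
    rw [hKc, Finset.mem_filter] at hi
    have hik : (⟨k, hkm⟩ : Fin m) ≤ i := by
      rw [Fin.le_def]; simpa using le_of_not_gt hi.2
    have : β ⟨k, hkm⟩ ≤ β i := hmono hik
    exact Real.rpow_le_rpow_of_exponent_le hp (by rw [hε]; linarith)
  -- base bounds
  have hxb : ∀ i : Fin m, x ^ (-(μ i)) ≤ x₀ ^ (-(μ i)) := fun i =>
    Real.rpow_le_rpow_of_nonpos hx₀0 hxl (neg_nonpos.mpr (hμ i))
  have hrle : r ≤ A * p ^ (-ε) := by
    rw [hrdef, hA, Finset.sum_mul]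
    refine Finset.sum_le_sum fun i hi => ?_
    have h1 : b i * x ^ (-(μ i)) * p ^ (β₀ - β i)
        ≤ b i * x₀ ^ (-(μ i)) * p ^ (-ε) := by
      apply mul_le_mul
      · exact mul_le_mul_of_nonneg_left (hxb i) (hbpos i).le
      · exact hexp i hi
      · exact (Real.rpow_pos_of_pos hp0 _).le
      · exact (mul_nonneg (hbpos i).le (Real.rpow_pos_of_pos hx₀0 _).le)
    exact h1
  have hsle : s ≤ B * p ^ (-ε) := by
    rw [hsdef, hB, Finset.sum_mul]
    refine Finset.sum_le_sum fun i hi =>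
      mul_le_mul_of_nonneg_left (hexp i hi) (hbpos i).le
  have hNle : N ≤ N₀ := by
    rw [hNdef, hN₀]
    exact Finset.sum_le_sum fun i _ => mul_le_mul_of_nonneg_left (hxb i) (hbpos i).le
  have hSs : 0 < S + s := by linarith
  -- final computation
  rw [hℓeq]
  have hdiff : (N + r) / (S + s) - N / S = (r * S - N * s) / ((S + s) * S) := by
    field_simp
    ring
  rw [hdiff, abs_div, abs_of_pos (mul_pos hSs hSpos)]
  have hnum : |r * S - N * s| ≤ (A * S + N₀ * B) * p ^ (-ε) := by
    have h1 : |r * S - N * s| ≤ r * S + N * s := by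
      refine (abs_sub _ _).trans ?_
      rw [abs_of_nonneg (mul_nonneg hrnn hSpos.le), abs_of_nonneg (mul_nonneg hNpos.le hsnn)]
    have h2 : r * S ≤ A * p ^ (-ε) * S :=
      mul_le_mul_of_nonneg_right hrle hSpos.le
    have h3 : N * s ≤ N₀ * (B * p ^ (-ε)) :=
      mul_le_mul hNle hsle hsnn hN₀pos.le
    calc |r * S - N * s| ≤ r * S + N * s := h1
      _ ≤ A * p ^ (-ε) * S + N₀ * (B * p ^ (-ε)) := add_le_add h2 h3
      _ = (A * S + N₀ * B) * p ^ (-ε) := by ring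
  have hden : S ^ 2 ≤ (S + s) * S := by nlinarith
  have hRnn : 0 ≤ (A * S + N₀ * B) * p ^ (-ε) :=
    mul_nonneg (by nlinarith) (Real.rpow_pos_of_pos hp0 _).le
  calc |r * S - N * s| / ((S + s) * S)
      ≤ (A * S + N₀ * B) * p ^ (-ε) / S ^ 2 :=
        div_le_div₀ hRnn hnum (by positivity) hden
    _ = (A * S + N₀ * B) / S ^ 2 * p ^ (-ε) := by ring
end

section
/- (Perturbing the data exponent slows the decay of the finite-size collapse error.) Let m ≥ 2 and let (μ_i, ν_i), i = 1,…,m, be pairwise distinct pairs with μ_i, ν_i ≥ 0. Fix γ > 0 and set β_i(γ') = μ_i·γ' + ν_i for γ' ∈ ℝ. Suppose the minimum of {β_i(γ)} is attained at exactly the indices 1,…,k with k ≥ 2 (a tie), and define the gap ε(γ') = inf{ β_i(γ') − min_j β_j(γ') : β_i(γ') > min_j β_j(γ') } (with ε(γ') = +∞ when all β_i(γ') are equal). Then ε(γ) = β_{k+1}(γ) − β₁(γ) > 0 when k < m (and ε(γ) = +∞ when k = m), and there exist δ₀ > 0 and C > 0 such that for every δ with 0 < |δ| < δ₀, ε(γ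 + δ) ≤ C·|δ|; in particular ε(γ + δ) < ε(γ) for all sufficiently small δ ≠ 0. -/
/-!
At `γ` two tied indices `i, j` with `βᵢ(γ) = βⱼ(γ) = min β(γ)` have distinct slopes `μᵢ ≠ μⱼ`
(the pairs `(μ, ν)` are distinct), so for every `δ ≠ 0` the tie splits and one of them sits
strictly above the new minimum. Each `βₗ` moves by at most `M |δ|` with `M = maxₗ |μₗ|`, and so
does the minimum, hence the new gap is at most `2 M |δ|`. The gap at `γ` itself is positive,
being either `+∞` or a minimum of finitely many positive numbers.
-/

open Finset

section MinGap

variable {ι : Type*} [Fintype ι] [Nonempty ι]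

/-- `⊤` when `b` is constant (`sInf ∅ = ⊤`). -/
noncomputable def minGap (b : ι → ℝ) : EReal :=
  sInf {e : EReal | ∃ i, univ.inf' univ_nonempty b < b i ∧
    e = ((b i - univ.inf' univ_nonempty b : ℝ) : EReal)}

theorem minGap_le {b : ι → ℝ} {i : ι} (hi : univ.inf' univ_nonempty b < b i) :
    minGap b ≤ ((b i - univ.inf' univ_nonempty b : ℝ) : EReal) :=
  sInf_le ⟨i, hi, rfl⟩

theorem minGap_eq_top {b : ι → ℝ} (h : ∀ i, b i = univ.inf' univ_nonempty b) :
    minGap b = ⊤ := by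
  refine sInf_eq_top.2 ?_
  rintro e ⟨i, hi, -⟩
  exact absurd (h i) hi.ne'

theorem minGap_eq_of_forall_le {b : ι → ℝ} {j : ι} (hj : univ.inf' univ_nonempty b < b j)
    (h : ∀ i, univ.inf' univ_nonempty b < b i → b j ≤ b i) :
    minGap b = ((b j - univ.inf' univ_nonempty b : ℝ) : EReal) := by
  refine le_antisymm (minGap_le hj) (le_sInf ?_)
  rintro e ⟨i, hi, rfl⟩
  exact EReal.coe_le_coe_iff.2 (by linarith [h i hi])

theorem minGap_pos (b : ι → ℝ) : 0 < minGap b := by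
  set S := {e : EReal | ∃ i, univ.inf' univ_nonempty b < b i ∧
    e = ((b i - univ.inf' univ_nonempty b : ℝ) : EReal)}
  rcases S.eq_empty_or_nonempty with hS | hS
  · change 0 < sInf S
    rw [hS, sInf_empty]
    exact EReal.zero_lt_top
  have hfin : S.Finite := (Set.finite_range fun i =>
    ((b i - univ.inf' univ_nonempty b : ℝ) : EReal)).subset <| by
      rintro e ⟨i, -, rfl⟩
      exact ⟨i, rfl⟩
  refine (hfin.lt_csInf_iff hS).2 ?_
  rintro e ⟨i, hi, rfl⟩
  exact EReal.coe_pos.2 (sub_pos.2 hi)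

theorem inf'_sub_le_inf' {b b' : ι → ℝ} {r : ℝ} (h : ∀ i, |b' i - b i| ≤ r) :
    univ.inf' univ_nonempty b - r ≤ univ.inf' univ_nonempty b' :=
  le_inf' _ _ fun i _ => by
    linarith [inf'_le b (mem_univ i), neg_abs_le (b' i - b i), h i]

theorem minGap_le_two_mul {b b' : ι → ℝ} {r : ℝ} {i : ι} (h : ∀ l, |b' l - b l| ≤ r)
    (hi : b i = univ.inf' univ_nonempty b) (hlt : univ.inf' univ_nonempty b' < b' i) :
    minGap b' ≤ ((2 * r : ℝ) : EReal) := by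
  refine (minGap_le hlt).trans (EReal.coe_le_coe_iff.2 ?_)
  linarith [inf'_sub_le_inf' h, le_abs_self (b' i - b i), h i]

theorem sup'_abs_pos_of_ne {μ : ι → ℝ} {i j : ι} (h : μ i ≠ μ j) :
    0 < univ.sup' univ_nonempty fun l => |μ l| := by
  obtain ⟨l, hl⟩ : ∃ l, μ l ≠ 0 := by
    by_contra! h0
    exact h ((h0 i).trans (h0 j).symm)
  exact (abs_pos.2 hl).trans_le (le_sup' (fun l => |μ l|) (mem_univ l))

theorem minGap_affine_le_of_tie (μ ν : ι → ℝ) {γ δ : ℝ} {i j : ι} (hμ : μ i ≠ μ j)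
    (hi : μ i * γ + ν i = univ.inf' univ_nonempty fun l => μ l * γ + ν l)
    (hj : μ j * γ + ν j = univ.inf' univ_nonempty fun l => μ l * γ + ν l) (hδ : δ ≠ 0) :
    minGap (fun l => μ l * (γ + δ) + ν l) ≤
      ((2 * (univ.sup' univ_nonempty fun l => |μ l|) * |δ| : ℝ) : EReal) := by
  set M := univ.sup' univ_nonempty fun l => |μ l|
  have hclose : ∀ l, |(μ l * (γ + δ) + ν l) - (μ l * γ + ν l)| ≤ M * |δ| := fun l => by
    rw [show μ l * (γ + δ) + ν l - (μ l * γ + ν l) = μ l * δ by ring, abs_mul]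
    exact mul_le_mul_of_nonneg_right (le_sup' (fun l => |μ l|) (mem_univ l)) (abs_nonneg δ)
  obtain ⟨l, l', hl, hl', hlt⟩ : ∃ l l' : ι,
      μ l * γ + ν l = (univ.inf' univ_nonempty fun l => μ l * γ + ν l) ∧
      μ l' * γ + ν l' = (univ.inf' univ_nonempty fun l => μ l * γ + ν l) ∧
      μ l' * δ < μ l * δ := by
    have hne : μ i * δ ≠ μ j * δ := fun h => hμ (mul_right_cancel₀ hδ h)
    rcases hne.lt_or_gt with h | h
    · exact ⟨j, i, hj, hi, h⟩
    · exact ⟨i, j, hi, hj, h⟩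
  have hleave : (univ.inf' univ_nonempty fun l => μ l * (γ + δ) + ν l) < μ l * (γ + δ) + ν l :=
    (inf'_le (fun l => μ l * (γ + δ) + ν l) (mem_univ l')).trans_lt (by linarith)
  rw [mul_assoc]
  exact minGap_le_two_mul hclose hl hleave

end MinGap

theorem exists_pos_forall_abs_lt_mul_lt {E : EReal} (hE : 0 < E) {C : ℝ} (hC : 0 < C) :
    ∃ δ₀ : ℝ, 0 < δ₀ ∧ ∀ δ : ℝ, |δ| < δ₀ → ((C * |δ| : ℝ) : EReal) < E := by
  obtain ⟨q, hq0, hqE⟩ := EReal.lt_iff_exists_real_btwn.1 hE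
  refine ⟨q / C, div_pos (EReal.coe_pos.1 hq0) hC, fun δ hδ => lt_trans ?_ hqE⟩
  exact EReal.coe_lt_coe_iff.2 ((lt_div_iff₀' hC).1 hδ)

theorem stmt_10_general
    (n k : ℕ) (hk2 : 2 ≤ k)
    (μ ν : Fin (n + 2) → ℝ)
    (hdistinct : Function.Injective (fun i => (μ i, ν i)))
    (γ : ℝ)
    (βmin : ℝ → ℝ)
    (hβmin : ∀ γ' : ℝ, βmin γ' =
      Finset.univ.inf' Finset.univ_nonempty (fun j : Fin (n + 2) => μ j * γ' + ν j))
    (ε : ℝ → EReal)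
    (hε : ∀ γ' : ℝ, ε γ' = sInf {e : EReal | ∃ i : Fin (n + 2),
      βmin γ' < μ i * γ' + ν i ∧ e = ((μ i * γ' + ν i - βmin γ' : ℝ) : EReal)})
    (hmono : Monotone (fun i : Fin (n + 2) => μ i * γ + ν i))
    (htie : ∀ i : Fin (n + 2), μ i * γ + ν i = βmin γ ↔ i.val < k) :
    (∀ h : k < n + 2, ε γ =
        ((μ ⟨k, h⟩ * γ + ν ⟨k, h⟩ - (μ 0 * γ + ν 0) : ℝ) : EReal) ∧
        (0 : ℝ) < μ ⟨k, h⟩ * γ + ν ⟨k, h⟩ - (μ 0 * γ + ν 0)) ∧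
    (k = n + 2 → ε γ = ⊤) ∧
    (∃ δ₀ : ℝ, 0 < δ₀ ∧ ∃ C : ℝ, 0 < C ∧ ∀ δ : ℝ, δ ≠ 0 → |δ| < δ₀ →
      ε (γ + δ) ≤ ((C * |δ| : ℝ) : EReal) ∧ ε (γ + δ) < ε γ) := by
  have hεgap : ∀ γ', ε γ' = minGap fun i => μ i * γ' + ν i := fun γ' => by
    rw [hε, hβmin]; rfl
  rw [hβmin] at htie
  have h0 := (htie 0).2 (by simp only [Fin.val_zero]; omega)
  have h1 := (htie 1).2 (by simp only [Fin.val_one]; omega)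
  refine ⟨fun hk => ?_, fun hk => ?_, ?_⟩
  · have hgt := lt_of_le_of_ne (inf'_le (fun i => μ i * γ + ν i) (mem_univ ⟨k, hk⟩))
      fun h => ((htie ⟨k, hk⟩).1 h.symm).false
    refine ⟨?_, by linarith⟩
    rw [hεgap, minGap_eq_of_forall_le hgt fun i hi => hmono ?_, h0]
    exact Fin.le_def.2 (not_lt.1 fun h => hi.ne' ((htie i).2 h))
  · exact (hεgap γ).trans (minGap_eq_top fun i => (htie i).2 (hk ▸ i.isLt))
  · have hμ01 : μ 0 ≠ μ 1 := fun h => by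
      refine zero_ne_one (hdistinct (Prod.ext h ?_))
      rw [h] at h0
      exact add_left_cancel (h0.trans h1.symm)
    have hC := mul_pos two_pos (sup'_abs_pos_of_ne hμ01)
    obtain ⟨δ₀, hδ₀, hsmall⟩ := exists_pos_forall_abs_lt_mul_lt (hεgap γ ▸ minGap_pos _) hC
    refine ⟨δ₀, hδ₀, _, hC, fun δ hδ hδδ₀ => ?_⟩
    have hle := (hεgap _).trans_le (minGap_affine_le_of_tie μ ν hμ01 h0 h1 hδ)
    exact ⟨hle, hle.trans_lt (hsmall δ hδδ₀)⟩

/-- **Perturbing the data exponent slows the decay of the finite-size collapse error.**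
For pairwise distinct pairs `(μᵢ, νᵢ)` and total exponents `βᵢ(γ') = μᵢ·γ' + νᵢ` whose
minimum at `γ' = γ` is attained exactly at the first `k ≥ 2` indices (a tie), the gap
`ε(γ')` (the distance from the smallest to the second-smallest distinct value, `+∞` if all
equal) satisfies: `ε(γ) = β_k(γ) − β₀(γ) > 0` when `k < m` and `ε(γ) = ⊤` when `k = m`;
and there are `δ₀, C > 0` with `ε(γ+δ) ≤ C·|δ| < ε(γ)` for all `0 < |δ| < δ₀`. -/
theorem stmt_10
    (n k : ℕ) (hk2 : 2 ≤ k) (hkm : k ≤ n + 2)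
    (μ ν : Fin (n + 2) → ℝ) (hμ : ∀ i, 0 ≤ μ i) (hν : ∀ i, 0 ≤ ν i)
    (hdistinct : Function.Injective (fun i => (μ i, ν i)))
    (γ : ℝ) (hγ : 0 < γ)
    (βmin : ℝ → ℝ)
    (hβmin : ∀ γ' : ℝ, βmin γ' =
      Finset.univ.inf' Finset.univ_nonempty (fun j : Fin (n + 2) => μ j * γ' + ν j))
    (ε : ℝ → EReal)
    (hε : ∀ γ' : ℝ, ε γ' = sInf {e : EReal | ∃ i : Fin (n + 2),
      βmin γ' < μ i * γ' + ν i ∧ e = ((μ i * γ' + ν i - βmin γ' : ℝ) : EReal)})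
    (hmono : Monotone (fun i : Fin (n + 2) => μ i * γ + ν i))
    (htie : ∀ i : Fin (n + 2), μ i * γ + ν i = βmin γ ↔ i.val < k) :
    (∀ h : k < n + 2, ε γ =
        ((μ ⟨k, h⟩ * γ + ν ⟨k, h⟩ - (μ 0 * γ + ν 0) : ℝ) : EReal) ∧
        (0 : ℝ) < μ ⟨k, h⟩ * γ + ν ⟨k, h⟩ - (μ 0 * γ + ν 0)) ∧
    (k = n + 2 → ε γ = ⊤) ∧
    (∃ δ₀ : ℝ, 0 < δ₀ ∧ ∃ C : ℝ, 0 < C ∧ ∀ δ : ℝ, δ ≠ 0 → |δ| < δ₀ →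
      ε (γ + δ) ≤ ((C * |δ| : ℝ) : EReal) ∧ ε (γ + δ) < ε γ) :=
  stmt_10_general n k hk2 μ ν hdistinct γ βmin hβmin ε hε hmono htie
end
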